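/- Let Θ : A* → A* be an involutive antimorphism and let u ∈ A^ℕ be an infinite word whose language is closed under Θ. Then u is recurrent: every factor of u has infinitely many occurrences in u. -/

import Mathlib

/-!
Basic notions from combinatorics on words: involutive antimorphisms,
Θ-palindromes, factors of infinite words, palindromic defect, richness.
-/

/-- `Θ` is an involutive antimorphism of the free monoid `A*` (words as lists). -/
def IsAntimorphism {A : Type*} (Θ : List A → List A) : Prop :=
  (∀ x y : List A, Θ (x ++ y) = Θ y ++ Θ x) ∧ ∀ x : List A, Θ (Θ x) = x

/-- The factor `u_i u_{i+1} … u_{i+n-1}` of the infinite word `u`. -/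
def factorAt {A : Type*} (u : ℕ → A) (i n : ℕ) : List A :=
  (List.range n).map fun k => u (i + k)

/-- `i` is an occurrence of `w` in the infinite word `u`. -/
def OccursAt {A : Type*} (u : ℕ → A) (w : List A) (i : ℕ) : Prop :=
  w = factorAt u i w.length

/-- `w` is a factor of the infinite word `u`. -/
def IsFactorOf {A : Type*} (w : List A) (u : ℕ → A) : Prop :=
  ∃ i, OccursAt u w i

/-- The prefix of length `n` of the infinite word `u`. -/
def prefixWord {A : Type*} (u : ℕ → A) (n : ℕ) : List A :=
  factorAt u 0 n

/-- `u` is recurrent: every factor has infinitely many occurrences. -/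
def Recurrent {A : Type*} (u : ℕ → A) : Prop :=
  ∀ w, IsFactorOf w u → ∀ N, ∃ i, N ≤ i ∧ OccursAt u w i

/-- `u` is uniformly recurrent: every factor occurs with bounded gaps
(equivalently, every factor has finitely many return words). -/
def UniformlyRecurrent {A : Type*} (u : ℕ → A) : Prop :=
  ∀ w, IsFactorOf w u → ∃ R, ∀ N, ∃ i, N ≤ i ∧ i < N + R ∧ OccursAt u w i

/-- `i` is an occurrence of the word `s` in the finite word `r`. -/
def OccursIn {A : Type*} (s r : List A) (i : ℕ) : Prop :=
  i + s.length ≤ r.length ∧ s = (r.drop i).take s.length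

/-- `s` occurs exactly once in `r`. -/
def Unioccurrent {A : Type*} (s r : List A) : Prop :=
  Set.ncard {i | OccursIn s r i} = 1

/-- The set `Pal_Θ(w)` of `Θ`-palindromic factors of the finite word `w`
(the empty word included). -/
def palSet {A : Type*} (Θ : List A → List A) (w : List A) : Set (List A) :=
  {p | p <:+: w ∧ Θ p = p}

/-- `γ_Θ(w)`: the number of pairs `{a, Θ(a)}` where `a` is a letter occurring
in `w` with `a ≠ Θ(a)`. -/
noncomputable def gammaTheta {A : Type*} (Θ : List A → List A) (w : List A) : ℕ :=
  Set.ncard {P : Set A | ∃ a, a ∈ w ∧ Θ [a] ≠ [a] ∧ P = {b | [b] = [a] ∨ [b] = Θ [a]}}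

/-- The `Θ`-palindromic defect `D_Θ(w) = |w| + 1 - γ_Θ(w) - #Pal_Θ(w)` of a finite word. -/
noncomputable def defect {A : Type*} (Θ : List A → List A) (w : List A) : ℤ :=
  (w.length : ℤ) + 1 - gammaTheta Θ w - (palSet Θ w).ncard

/-- The infinite word `u` has finite `Θ`-palindromic defect
(`D_Θ(u) = sup { D_Θ(w) : w factor of u } < ∞`), i.e. `u` is almost `Θ`-rich. -/
def FiniteDefect {A : Type*} (Θ : List A → List A) (u : ℕ → A) : Prop :=
  ∃ C : ℤ, ∀ w, IsFactorOf w u → defect Θ w ≤ C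

/-- The infinite word `u` is `Θ`-rich: every factor `w` satisfies
`#Pal_Θ(w) = |w| + 1 - γ_Θ(w)`, i.e. has zero `Θ`-defect. -/
def RichWord {A : Type*} (Θ : List A → List A) (u : ℕ → A) : Prop :=
  ∀ w, IsFactorOf w u → defect Θ w = 0

/-- The language of `u` is closed under `Θ`. -/
def LangClosedUnder {A : Type*} (Θ : List A → List A) (u : ℕ → A) : Prop :=
  ∀ w, IsFactorOf w u → IsFactorOf (Θ w) u

/-- `u` is the image of the infinite word `v` under the monoid morphism
`B* → A*` determined by `φ` on letters, i.e. `u = φ(v₀)φ(v₁)φ(v₂)…`. -/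
def IsMorphicImage {A B : Type*} (u : ℕ → A) (φ : B → List A) (v : ℕ → B) : Prop :=
  (∀ n, OccursAt u ((prefixWord v n).flatMap φ) 0) ∧
    ∀ N, ∃ n, N ≤ ((prefixWord v n).flatMap φ).length

/-- The occurrences of `w` and `w'` in `u` alternate: listing in increasing order
all occurrences of `w` or `w'`, consecutive indices are alternately occurrences
of `w` and of `w'` (between two occurrences of one of them, the second of which is
not an occurrence of the other, there is an occurrence of the other). -/
def AlternateIn {A : Type*} (u : ℕ → A) (w w' : List A) : Prop :=
  (∀ i j, i < j → OccursAt u w i → OccursAt u w j → ¬ OccursAt u w' j →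
    ∃ k, i < k ∧ k < j ∧ OccursAt u w' k) ∧
  (∀ i j, i < j → OccursAt u w' i → OccursAt u w' j → ¬ OccursAt u w j →
    ∃ k, i < k ∧ k < j ∧ OccursAt u w k)

/-- Factor complexity `C(n)` of the infinite word `u`. -/
noncomputable def complexity {A : Type*} (u : ℕ → A) (n : ℕ) : ℕ :=
  Set.ncard {w : List A | IsFactorOf w u ∧ w.length = n}

/-- `Θ`-palindromic complexity `P_Θ(n)` of the infinite word `u`. -/
noncomputable def palComplexity {A : Type*} (Θ : List A → List A) (u : ℕ → A) (n : ℕ) : ℕ :=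
  Set.ncard {w : List A | IsFactorOf w u ∧ w.length = n ∧ Θ w = w}

/-- `r` is a complete return word of `w` in `u`: a factor of `u` with exactly two
occurrences of `w`, one as a prefix and one as a suffix. -/
def IsCompleteReturnWord {A : Type*} (u : ℕ → A) (w r : List A) : Prop :=
  IsFactorOf r u ∧ w <+: r ∧ w <:+ r ∧ Set.ncard {i | OccursIn w r i} = 2

section Aux

variable {A : Type*}

lemma factorAt_length (u : ℕ → A) (i n : ℕ) : (factorAt u i n).length = n := by
  simp [factorAt]

lemma factorAt_add (u : ℕ → A) (i m n : ℕ) :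
    factorAt u i (m + n) = factorAt u i m ++ factorAt u (i + m) n := by
  simp only [factorAt, List.range_add, List.map_append, List.map_map]
  congr 1
  refine List.map_congr_left fun k _ => ?_
  simp only [Function.comp]
  congr 1
  omega

lemma occursAt_middle {u : ℕ → A} {x w y : List A} {j : ℕ}
    (h : OccursAt u (x ++ w ++ y) j) : OccursAt u w (j + x.length) := by
  unfold OccursAt at h ⊢
  have hlen : (x ++ w ++ y).length = (x.length + w.length) + y.length := by
    simp; omega
  rw [hlen, factorAt_add] at h
  have h1 := List.append_inj h (by simp [factorAt_length])
  have h2 : x ++ w = factorAt u j x.length ++ factorAt u (j + x.length) w.length := by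
    rw [h1.1, ← factorAt_add]
  have h3 := List.append_inj h2 (by rw [factorAt_length])
  exact h3.2

lemma theta_nil {Θ : List A → List A} (hΘ : IsAntimorphism Θ) : Θ [] = [] := by
  have h := hΘ.1 [] []
  simp only [List.append_nil] at h
  have hl := congrArg List.length h
  rw [List.length_append] at hl
  exact List.eq_nil_of_length_eq_zero (by omega)

lemma theta_cons {Θ : List A → List A} (hΘ : IsAntimorphism Θ) (a : A) (x : List A) :
    Θ (a :: x) = Θ x ++ Θ [a] := by
  have h := hΘ.1 [a] x
  rw [List.singleton_append] at h
  exact h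

lemma theta_len_sum {Θ : List A → List A} (hΘ : IsAntimorphism Θ) (x : List A) :
    (Θ x).length = (x.map fun a => (Θ [a]).length).sum := by
  induction x with
  | nil => simp [theta_nil hΘ]
  | cons a t ih =>
    rw [theta_cons hΘ, List.length_append, ih]
    simp only [List.map_cons, List.sum_cons]
    omega

lemma theta_letter_pos {Θ : List A → List A} (hΘ : IsAntimorphism Θ) (a : A) :
    1 ≤ (Θ [a]).length := by
  by_contra h
  have h0 : Θ [a] = [] := List.eq_nil_of_length_eq_zero (by omega)
  have := hΘ.2 [a]
  rw [h0, theta_nil hΘ] at this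
  exact nomatch this

lemma sum_ge_length_of_one_le : ∀ (l : List ℕ), (∀ n ∈ l, 1 ≤ n) → l.length ≤ l.sum := by
  intro l
  induction l with
  | nil => simp
  | cons a t ih =>
    intro h
    have ha := h a List.mem_cons_self
    have ht := ih fun n hn => h n (List.mem_cons_of_mem a hn)
    simp only [List.length_cons, List.sum_cons]
    omega

lemma theta_letter_one {Θ : List A → List A} (hΘ : IsAntimorphism Θ) (a : A) :
    (Θ [a]).length = 1 := by
  have h1 : (Θ (Θ [a])).length = 1 := by rw [hΘ.2]; rfl
  rw [theta_len_sum hΘ] at h1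
  have hge : ((Θ [a]).map fun b => (Θ [b]).length).length ≤
      ((Θ [a]).map fun b => (Θ [b]).length).sum := by
    apply sum_ge_length_of_one_le
    intro n hn
    obtain ⟨b, _, rfl⟩ := List.mem_map.1 hn
    exact theta_letter_pos hΘ b
  rw [List.length_map] at hge
  have := theta_letter_pos hΘ a
  omega

lemma theta_length {Θ : List A → List A} (hΘ : IsAntimorphism Θ) (x : List A) :
    (Θ x).length = x.length := by
  rw [theta_len_sum hΘ]
  have : (x.map fun a => (Θ [a]).length) = x.map fun _ => 1 :=
    List.map_congr_left fun a _ => theta_letter_one hΘ a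
  rw [this]
  simp [List.sum_replicate, Nat.smul_one_eq_cast]

/-- Key step: if `w` occurs in `u` and the language is closed under `Θ`,
then `Θ w` occurs at arbitrarily large positions. -/
lemma theta_occurs_ge {Θ : List A → List A} (hΘ : IsAntimorphism Θ)
    {u : ℕ → A} (hcl : LangClosedUnder Θ u) {w : List A} {i : ℕ}
    (hi : OccursAt u w i) (N : ℕ) : ∃ j, N ≤ j ∧ OccursAt u (Θ w) j := by
  -- the prefix of length i + |w| + N decomposes as x ++ w ++ y with |y| = N
  set x : List A := factorAt u 0 i with hx
  set y : List A := factorAt u (i + w.length) N with hy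
  unfold OccursAt at hi
  have hdecomp : factorAt u 0 (i + w.length + N) = x ++ w ++ y := by
    rw [factorAt_add, factorAt_add]
    simp only [Nat.zero_add]
    rw [← hi]
  have hpfac : IsFactorOf (x ++ w ++ y) u := by
    refine ⟨0, ?_⟩
    unfold OccursAt
    rw [← hdecomp, factorAt_length]
  obtain ⟨j, hj⟩ := hcl _ hpfac
  -- Θ (x ++ w ++ y) = Θ y ++ Θ w ++ Θ x
  have hth : Θ (x ++ w ++ y) = Θ y ++ Θ w ++ Θ x := by
    rw [hΘ.1, hΘ.1, List.append_assoc]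
  rw [hth] at hj
  have hocc := occursAt_middle hj
  refine ⟨j + (Θ y).length, ?_, hocc⟩
  rw [theta_length hΘ, hy, factorAt_length]
  omega

end Aux

/-- An infinite word whose language is closed under `Θ` is recurrent. -/
theorem recurrent_of_lang_closed
    {A : Type*} [Fintype A] (Θ : List A → List A) (hΘ : IsAntimorphism Θ)
    (u : ℕ → A) (hcl : LangClosedUnder Θ u) :
    Recurrent u := by
  intro w hw N
  obtain ⟨i', hi'⟩ := hcl w hw
  obtain ⟨j, hjN, hocc⟩ := theta_occurs_ge hΘ hcl hi' N
  rw [hΘ.2] at hocc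
  exact ⟨j, hjN, hocc⟩
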